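/- arXiv:2206.00627 — 4 statements merged into one kernel-verified Lean document; each statement's English description precedes it below -/
import Mathlib

section
/- Let M be a symplectic 2n×2n real matrix satisfying ρ₀·M·ρ₀ = M⁻¹, where ρ₀ = [[I, 0], [0, −I]] in n×n blocks. Write M in n×n blocks as M = [[A, B], [C, D]]. Then D = Aᵀ, and the blocks satisfy B = Bᵀ, C = Cᵀ, A·B = B·Aᵀ, Aᵀ·C = C·A, and A² − B·C = I; that is, M = M_{A,B,C}. -/
open Matrix

/-- If `M = [[A, B], [C, D]]` is a symplectic `2n × 2n` real matrix satisfying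
`ρ₀ * M * ρ₀ = M⁻¹` with `ρ₀ = [[1, 0], [0, -1]]`, then `D = Aᵀ` and the blocks satisfy
`B = Bᵀ`, `C = Cᵀ`, `A*B = B*Aᵀ`, `Aᵀ*C = C*A`, `A² - B*C = 1`; i.e. `M = M_{A,B,C}`. -/
theorem blocks_of_symplectic_reversible {n : ℕ} (A B C D : Matrix (Fin n) (Fin n) ℝ)
    (hsymp : (fromBlocks A B C D)ᵀ * fromBlocks (0 : Matrix (Fin n) (Fin n) ℝ) 1 (-1) 0 *
      fromBlocks A B C D = fromBlocks (0 : Matrix (Fin n) (Fin n) ℝ) 1 (-1) 0)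
    (hrev : fromBlocks (1 : Matrix (Fin n) (Fin n) ℝ) 0 0 (-1) * fromBlocks A B C D *
      fromBlocks (1 : Matrix (Fin n) (Fin n) ℝ) 0 0 (-1) = (fromBlocks A B C D)⁻¹) :
    D = Aᵀ ∧ B = Bᵀ ∧ C = Cᵀ ∧ A * B = B * Aᵀ ∧ Aᵀ * C = C * A ∧ A * A - B * C = 1 := by
  set M := fromBlocks A B C D with hM
  set J : Matrix (Fin n ⊕ Fin n) (Fin n ⊕ Fin n) ℝ := fromBlocks 0 1 (-1) 0 with hJ
  -- left inverse
  have hleft : (fromBlocks Dᵀ (-Bᵀ) (-Cᵀ) Aᵀ) * M = 1 := by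
    have h1 : (-J) * (Mᵀ * J * M) = (-J) * J := by rw [hsymp]
    have h2 : (-J) * J = 1 := by
      simp [hJ, fromBlocks_multiply, ← fromBlocks_one, fromBlocks_neg]
    have h3 : (-J) * Mᵀ * J = fromBlocks Dᵀ (-Bᵀ) (-Cᵀ) Aᵀ := by
      simp [hJ, hM, fromBlocks_multiply, fromBlocks_transpose, fromBlocks_neg]
    calc fromBlocks Dᵀ (-Bᵀ) (-Cᵀ) Aᵀ * M = (-J) * Mᵀ * J * M := by rw [h3]
      _ = (-J) * (Mᵀ * J * M) := by noncomm_ring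
      _ = 1 := by rw [hsymp, h2]
  have hinv : M⁻¹ = fromBlocks Dᵀ (-Bᵀ) (-Cᵀ) Aᵀ := Matrix.inv_eq_left_inv hleft
  rw [hinv] at hrev
  have hrev' : fromBlocks A (-B) (-C) D = fromBlocks Dᵀ (-Bᵀ) (-Cᵀ) Aᵀ := by
    rw [← hrev, hM]
    simp [fromBlocks_multiply]
  rw [fromBlocks_inj] at hrev'
  obtain ⟨hAD, hB, hC, hD⟩ := hrev'
  have hB' : B = Bᵀ := by have := hB; simpa [neg_eq_iff_eq_neg] using this
  have hC' : C = Cᵀ := by have := hC; simpa [neg_eq_iff_eq_neg] using this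
  -- expand symplectic condition
  rw [hM, hJ, fromBlocks_transpose] at hsymp
  simp only [fromBlocks_multiply, Matrix.mul_zero, Matrix.zero_mul, Matrix.mul_one, Matrix.one_mul, Matrix.mul_neg, Matrix.neg_mul, zero_add, add_zero, neg_neg] at hsymp
  rw [fromBlocks_inj] at hsymp
  obtain ⟨e11, e12, e21, e22⟩ := hsymp
  have hDT : Dᵀ = A := by rw [hD, transpose_transpose]
  refine ⟨hD, hB', hC', ?_, ?_, ?_⟩
  · have := e22
    rw [hDT, ← hB', hD] at this
    linear_combination (norm := noncomm_ring) -this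
  · have := e11
    rw [← hC'] at this
    linear_combination (norm := noncomm_ring) this
  · have := e21
    rw [hDT, ← hB'] at this
    linear_combination (norm := noncomm_ring) -this
end

section
/- Let A, B, C be n×n real matrices satisfying B = Bᵀ, C = Cᵀ, A·B = B·Aᵀ, Aᵀ·C = C·A, A² − B·C = I. Then a nonzero complex number λ is an eigenvalue of M_{A,B,C} (viewed as a complex matrix) if and only if (λ + λ⁻¹)/2 is an eigenvalue of A (viewed as a complex matrix). -/
open Matrix

/-!
Write `N = λ • 1 - M_{A,B,C}` and `N'` for the same matrix with `B` and `C` negated. Conjugation by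
`diag(1, -1)` turns `N` into `N'`, so `det N' = det N`. The hypotheses make `N * N'` block diagonal
with blocks `P` and `Pᵀ`, where `P = (λ² + 1) • 1 - 2λ • A = 2λ • ((λ + λ⁻¹) / 2 • 1 - A)`. Hence
`(det N)² = (det P)²`, and for `λ ≠ 0` the two determinants vanish together.
-/

namespace Matrix

variable {m n R : Type*} [DecidableEq m] [DecidableEq n] [CommRing R]

theorem smul_one_sub_fromBlocks (l : R) (A : Matrix m m R) (B : Matrix m n R) (C : Matrix n m R)
    (D : Matrix n n R) :
    l • 1 - fromBlocks A B C D = fromBlocks (l • 1 - A) (-B) (-C) (l • 1 - D) := by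
  rw [← fromBlocks_one, fromBlocks_smul, sub_eq_add_neg, fromBlocks_neg, fromBlocks_add]
  simp [sub_eq_add_neg]

variable [Fintype m] [Fintype n]

theorem det_fromBlocks_neg_neg (A : Matrix m m R) (B : Matrix m n R) (C : Matrix n m R)
    (D : Matrix n n R) : det (fromBlocks A (-B) (-C) D) = det (fromBlocks A B C D) := by
  set E : Matrix (m ⊕ n) (m ⊕ n) R := fromBlocks 1 0 0 (-1)
  have hEE : det E * det E = 1 := by
    rw [← det_mul, fromBlocks_multiply]
    simp [fromBlocks_one]
  have hconj : fromBlocks A (-B) (-C) D = E * fromBlocks A B C D * E := by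
    simp [E, fromBlocks_multiply]
  rw [hconj, det_mul, det_mul, mul_right_comm, hEE, one_mul]

theorem det_smul_one_sub_fromBlocks_neg_neg (l : R) (A : Matrix m m R) (B : Matrix m n R)
    (C : Matrix n m R) (D : Matrix n n R) :
    det (l • 1 - fromBlocks A (-B) (-C) D) = det (l • 1 - fromBlocks A B C D) := by
  rw [smul_one_sub_fromBlocks, smul_one_sub_fromBlocks, det_fromBlocks_neg_neg]

variable {A B C : Matrix n n R}

theorem smul_one_sub_fromBlocks_mul_smul_one_sub_fromBlocks_neg_neg (hB : B.IsSymm)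
    (hC : C.IsSymm) (hAB : A * B = B * Aᵀ) (hAC : Aᵀ * C = C * A) (hABC : A * A - B * C = 1)
    (l : R) :
    (l • 1 - fromBlocks A B C Aᵀ) * (l • 1 - fromBlocks A (-B) (-C) Aᵀ) =
      fromBlocks ((l ^ 2 + 1) • 1 - (2 * l) • A) 0 0 ((l ^ 2 + 1) • 1 - (2 * l) • A)ᵀ := by
  have hABC_transpose : Aᵀ * Aᵀ - C * B = 1 := by
    simpa [transpose_sub, transpose_mul, hB.eq, hC.eq] using congrArg transpose hABC
  simp only [smul_one_sub_fromBlocks, fromBlocks_multiply, neg_neg, transpose_sub, transpose_smul,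
    transpose_one]
  congr 1 <;>
    simp only [sub_mul, mul_sub, smul_mul_assoc, mul_smul_comm, one_mul, mul_one, neg_mul]
  · linear_combination (norm := module) hABC
  · linear_combination (norm := module) -hAB
  · linear_combination (norm := module) -hAC
  · linear_combination (norm := module) hABC_transpose

theorem det_smul_one_sub_fromBlocks_sq (hB : B.IsSymm) (hC : C.IsSymm) (hAB : A * B = B * Aᵀ)
    (hAC : Aᵀ * C = C * A) (hABC : A * A - B * C = 1) (l : R) :
    det (l • 1 - fromBlocks A B C Aᵀ) ^ 2 = det ((l ^ 2 + 1) • 1 - (2 * l) • A) ^ 2 := by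
  have h := congrArg det
    (smul_one_sub_fromBlocks_mul_smul_one_sub_fromBlocks_neg_neg hB hC hAB hAC hABC l)
  rwa [det_mul, det_smul_one_sub_fromBlocks_neg_neg, det_fromBlocks_zero₂₁, det_transpose,
    ← sq, ← sq] at h

end Matrix

/-- For `M = M_{A,B,C}` of the block form `[[A, B], [C, Aᵀ]]`, a nonzero complex number `λ`
is an eigenvalue of `M` (as a complex matrix) if and only if `(λ + λ⁻¹)/2` is an eigenvalue
of `A` (as a complex matrix). -/
theorem eigenvalue_blockMatrix_iff {n : ℕ} (A B C : Matrix (Fin n) (Fin n) ℝ)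
    (hB : B = Bᵀ) (hC : C = Cᵀ) (hAB : A * B = B * Aᵀ)
    (hAC : Aᵀ * C = C * A) (hABC : A * A - B * C = 1)
    (l : ℂ) (hl : l ≠ 0) :
    det (l • (1 : Matrix (Fin n ⊕ Fin n) (Fin n ⊕ Fin n) ℂ) -
        (fromBlocks A B C Aᵀ).map (Complex.ofReal ·)) = 0 ↔
      det (((l + l⁻¹) / 2) • (1 : Matrix (Fin n) (Fin n) ℂ) - A.map (Complex.ofReal ·)) = 0 := by
  set f : Matrix (Fin n) (Fin n) ℝ →+* Matrix (Fin n) (Fin n) ℂ := Complex.ofRealHom.mapMatrix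
  have hf_transpose (X : Matrix (Fin n) (Fin n) ℝ) : f Xᵀ = (f X)ᵀ := rfl
  have hM : (fromBlocks A B C Aᵀ).map (Complex.ofReal ·) = fromBlocks (f A) (f B) (f C) (f A)ᵀ :=
    fromBlocks_map ..
  have hsq := det_smul_one_sub_fromBlocks_sq (A := f A) (B := f B) (C := f C)
    (IsSymm.map hB.symm _) (IsSymm.map hC.symm _)
    (by rw [← hf_transpose, ← map_mul, ← map_mul, hAB])
    (by rw [← hf_transpose, ← map_mul, ← map_mul, hAC])
    (by rw [← map_mul, ← map_mul, ← map_sub, hABC, map_one]) l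
  have hfactor : (l ^ 2 + 1) • 1 - (2 * l) • f A = (2 * l) • (((l + l⁻¹) / 2) • 1 - f A) := by
    rw [smul_sub, smul_smul]
    congr 2
    field_simp
  rw [hM, ← pow_eq_zero_iff two_ne_zero, hsq, hfactor, det_smul, pow_eq_zero_iff two_ne_zero,
    mul_eq_zero, or_iff_right (pow_ne_zero _ (mul_ne_zero two_ne_zero hl))]
  rfl
end

section
/- Let A, B, C be 2×2 real matrices satisfying B = Bᵀ, C = Cᵀ, A·B = B·Aᵀ, Aᵀ·C = C·A, A² − B·C = I. Then the characteristic polynomial of the 4×4 matrix M_{A,B,C} equals X⁴ − 2·tr(A)·X³ + (2 + 4·det(A))·X² − 2·tr(A)·X + 1. In particular, tr(M_{A,B,C}) = 2·tr(A), and det(A) is determined by the coefficient c₂ of X² via det(A) = c₂/4 − 1/2. -/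
open Matrix Polynomial

private lemma my_det_fin_four' {R : Type*} [CommRing R] (M : Matrix (Fin 4) (Fin 4) R) :
    M.det =
      M 0 0*M 1 1*M 2 2*M 3 3 - M 0 0*M 1 1*M 2 3*M 3 2 - M 0 0*M 1 2*M 2 1*M 3 3
      + M 0 0*M 1 2*M 2 3*M 3 1 + M 0 0*M 1 3*M 2 1*M 3 2 - M 0 0*M 1 3*M 2 2*M 3 1
      - M 0 1*M 1 0*M 2 2*M 3 3 + M 0 1*M 1 0*M 2 3*M 3 2 + M 0 1*M 1 2*M 2 0*M 3 3
      - M 0 1*M 1 2*M 2 3*M 3 0 - M 0 1*M 1 3*M 2 0*M 3 2 + M 0 1*M 1 3*M 2 2*M 3 0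
      + M 0 2*M 1 0*M 2 1*M 3 3 - M 0 2*M 1 0*M 2 3*M 3 1 - M 0 2*M 1 1*M 2 0*M 3 3
      + M 0 2*M 1 1*M 2 3*M 3 0 + M 0 2*M 1 3*M 2 0*M 3 1 - M 0 2*M 1 3*M 2 1*M 3 0
      - M 0 3*M 1 0*M 2 1*M 3 2 + M 0 3*M 1 0*M 2 2*M 3 1 + M 0 3*M 1 1*M 2 0*M 3 2
      - M 0 3*M 1 1*M 2 2*M 3 0 - M 0 3*M 1 2*M 2 0*M 3 1 + M 0 3*M 1 2*M 2 1*M 3 0 := by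
  simp [Matrix.det_succ_row_zero, Fin.sum_univ_succ, Fin.succAbove,
    show ((2:Fin 3).succ : Fin 4) = 3 from rfl, show ((2:Fin 3).castSucc : Fin 4) = 2 from rfl]
  ring

/-- For `2 × 2` blocks `A, B, C` satisfying the symplectic relations, the characteristic
polynomial of the `4 × 4` matrix `M_{A,B,C}` equals
`X⁴ - 2·tr(A)·X³ + (2 + 4·det(A))·X² - 2·tr(A)·X + 1`; in particular
`tr(M_{A,B,C}) = 2·tr(A)` and `det(A) = c₂/4 - 1/2` where `c₂` is the coefficient of `X²`. -/
theorem charpoly_blockMatrix_dim_four (A B C : Matrix (Fin 2) (Fin 2) ℝ)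
    (hB : B = Bᵀ) (hC : C = Cᵀ) (hAB : A * B = B * Aᵀ)
    (hAC : Aᵀ * C = C * A) (hABC : A * A - B * C = 1) :
    (fromBlocks A B C Aᵀ).charpoly =
      X ^ 4 - Polynomial.C (2 * A.trace) * X ^ 3 + Polynomial.C (2 + 4 * A.det) * X ^ 2 -
        Polynomial.C (2 * A.trace) * X + 1 ∧
    (fromBlocks A B C Aᵀ).trace = 2 * A.trace ∧
    A.det = (fromBlocks A B C Aᵀ).charpoly.coeff 2 / 4 - 1 / 2 := by
  have hab00' := congrFun (congrFun hAB 0) 0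
  have hab01' := congrFun (congrFun hAB 0) 1
  have hac00' := congrFun (congrFun hAC 0) 0
  have hac01' := congrFun (congrFun hAC 0) 1
  have hac10' := congrFun (congrFun hAC 1) 0
  have habc00' := congrFun (congrFun hABC 0) 0
  have habc01' := congrFun (congrFun hABC 0) 1
  have habc11' := congrFun (congrFun hABC 1) 1
  simp only [Matrix.mul_apply, Fin.sum_univ_two, Matrix.transpose_apply, Matrix.sub_apply,
    Matrix.one_apply_eq, Matrix.one_apply_ne, Matrix.one_apply, if_true, if_false,
    Fin.zero_eq_one_iff, Fin.one_eq_zero_iff, Nat.succ_ne_self, ite_false, ite_true,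
    show ((0:Fin 2) = 1) = False by simp, show ((1:Fin 2) = 0) = False by simp]
    at hab00' hab01' hac00' hac01' hac10' habc00' habc01' habc11'
  have hab00 := congrArg Polynomial.C hab00'
  have hab01 := congrArg Polynomial.C hab01'
  have hac00 := congrArg Polynomial.C hac00'
  have hac01 := congrArg Polynomial.C hac01'
  have hac10 := congrArg Polynomial.C hac10'
  have habc00 := congrArg Polynomial.C habc00'
  have habc01 := congrArg Polynomial.C habc01'
  have habc11 := congrArg Polynomial.C habc11'
  simp only [map_add, _root_.map_mul, map_sub, _root_.map_one, map_zero]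
    at hab00 hab01 hac00 hac01 hac10 habc00 habc01 habc11
  have hN : (reindex finSumFinEquiv finSumFinEquiv (fromBlocks A B C Aᵀ)) =
      !![A 0 0, A 0 1, B 0 0, B 0 1;
         A 1 0, A 1 1, B 1 0, B 1 1;
         C 0 0, C 0 1, A 0 0, A 1 0;
         C 1 0, C 1 1, A 0 1, A 1 1] := by
    ext i j
    fin_cases i <;> fin_cases j <;> rfl
  have h1 : (fromBlocks A B C Aᵀ).charpoly =
      X ^ 4 - Polynomial.C (2 * A.trace) * X ^ 3 + Polynomial.C (2 + 4 * A.det) * X ^ 2 -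
        Polynomial.C (2 * A.trace) * X + 1 := by
    rw [← Matrix.charpoly_reindex finSumFinEquiv, hN, Matrix.charpoly, my_det_fin_four']
    simp only [charmatrix_apply, Matrix.diagonal_apply, Matrix.cons_val', Matrix.cons_val_zero,
      Matrix.cons_val_one, Matrix.cons_val_two, Matrix.cons_val_three, Matrix.head_cons,
      Matrix.tail_cons, Matrix.cons_val_fin_one, Matrix.empty_val', ne_eq, Matrix.of_apply,
      Matrix.map_apply, Matrix.trace_fin_two, Matrix.det_fin_two,
      map_add, _root_.map_mul, map_sub, map_ofNat, Fin.isValue]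
    norm_num [Fin.ext_iff, show ((3 : Fin 4) : ℕ) = 3 from rfl, show ((2 : Fin 4) : ℕ) = 2 from rfl,
      show ((1 : Fin 4) : ℕ) = 1 from rfl, show ((0 : Fin 4) : ℕ) = 0 from rfl]
    linear_combination ((-2 : ℝ[X]) * Polynomial.C (C 0 0) * X + (-1 : ℝ[X]) * Polynomial.C (A 1 0) * Polynomial.C (C 1 0) + Polynomial.C (A 1 0) * Polynomial.C (C 0 1)) * hab00 + ((-2 : ℝ[X]) * Polynomial.C (B 0 0) * X) * hac00 + (X * X + (-1 : ℝ[X]) * Polynomial.C (B 1 1) * Polynomial.C (C 1 1) + (-1 : ℝ[X]) * Polynomial.C (B 1 0) * Polynomial.C (C 0 1) + (-2 : ℝ[X]) * Polynomial.C (A 1 1) * X + Polynomial.C (A 1 1) * Polynomial.C (A 1 1) + Polynomial.C (A 0 1) * Polynomial.C (A 1 0)) * habc00 + ((-1 : ℝ[X]) * Polynomial.C (C 1 0) * X + (-1 : ℝ[X]) * Polynomial.C (C 0 1) * X + (-1 : ℝ[X]) * Polynomial.C (A 1 1) * Polynomial.C (C 1 0) + Polynomial.C (A 1 0) * Polynomial.C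 (C 1 1) + (-1 : ℝ[X]) * Polynomial.C (A 0 1) * Polynomial.C (C 0 0) + Polynomial.C (A 0 0) * Polynomial.C (C 0 1)) * hab01 + ((-1 : ℝ[X]) * Polynomial.C (B 1 0) * X + Polynomial.C (B 0 1) * X + Polynomial.C (A 0 0) * Polynomial.C (B 1 0) + (-1 : ℝ[X]) * Polynomial.C (A 0 0) * Polynomial.C (B 0 1)) * hac01 + (Polynomial.C (B 1 1) * Polynomial.C (C 1 0) + Polynomial.C (B 1 0) * Polynomial.C (C 0 0) + (4 : ℝ[X]) * Polynomial.C (A 1 0) * X + (-1 : ℝ[X]) * Polynomial.C (A 1 0) * Polynomial.C (A 1 1) + (-1 : ℝ[X]) * Polynomial.C (A 0 0) * Polynomial.C (A 1 0)) * habc01 + ((-2 : ℝ[X]) * Polynomial.C (B 0 1) * X) * hac10 + ((1 : ℝ[X]) + X * X + (-2 : ℝ[X]) * Polynomial.C (A 0 0) * X) * habc11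
  refine ⟨h1, ?_, ?_⟩
  · simp [Matrix.trace, Matrix.diag, Fintype.sum_sum_type, Fin.sum_univ_two]; ring
  · rw [h1]
    simp only [coeff_add, coeff_sub, coeff_C_mul, coeff_X_pow, coeff_X, coeff_one, coeff_C,
      Polynomial.coeff_one]
    norm_num
    ring
end

section
/- Let M be a real symplectic 2n×2n matrix, regarded as a complex matrix, let λ be a complex eigenvalue of M with |λ| = 1 and λ ∉ ℝ which is a simple root of the characteristic polynomial of M, and let v ∈ ℂ^{2n} be a nonzero vector with M·v = λ·v. Then the number vᵀ·G·v̄, where G = −i·J and v̄ is the entrywise complex conjugate of v, is a nonzero real number. In particular the Krein sign κ(λ) = sign(vᵀ·G·v̄) is well defined. -/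
open Matrix Polynomial

namespace KreinAux

variable {m : Type*} [Fintype m] [DecidableEq m]

lemma charpoly_toLin' (A : Matrix m m ℂ) : (Matrix.toLin' A).charpoly = A.charpoly := by
  rw [← LinearMap.charpoly_toMatrix (Matrix.toLin' A) (Pi.basisFun ℂ m),
    LinearMap.toMatrix_eq_toMatrix', LinearMap.toMatrix'_toLin']

lemma charpoly_sub_smul_one (A : Matrix m m ℂ) (μ : ℂ) :
    (A - μ • 1).charpoly = A.charpoly.comp (X + C μ) := by
  have h1 : A.charpoly.comp (X + C μ) =
      ((charmatrix A).map (aeval (X + C μ)).toRingHom).det := by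
    rw [Matrix.charpoly, comp_eq_aeval, AlgHom.map_det]
    rfl
  have h2 : (charmatrix A).map ((aeval (X + C μ)).toRingHom : ℂ[X] →+* ℂ[X]) =
      charmatrix (A - μ • 1) := by
    ext i j
    by_cases h : i = j
    · subst h
      simp [charmatrix_apply_eq, comp_eq_aeval, Matrix.sub_apply, Matrix.smul_apply,
        Matrix.one_apply_eq, C_sub, map_sub]
      ring
    · simp [charmatrix_apply_ne _ _ _ h, comp_eq_aeval, Matrix.sub_apply, Matrix.smul_apply,
        Matrix.one_apply_ne h]
  rw [Matrix.charpoly, ← h2, ← h1]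

lemma pow_two_dvd_charpoly (A : Matrix m m ℂ) (μ : ℂ) (u₁ u₂ : m → ℂ)
    (h1 : A.mulVec u₁ = μ • u₁) (h2 : A.mulVec u₂ = μ • u₂)
    (hind : LinearIndependent ℂ ![u₁, u₂]) : (X - C μ) ^ 2 ∣ A.charpoly := by
  set B := A - μ • (1 : Matrix m m ℂ) with hB
  have hBu : ∀ u, A.mulVec u = μ • u → B.mulVec u = 0 := by
    intro u hu
    rw [hB, Matrix.sub_mulVec, hu, Matrix.smul_mulVec, Matrix.one_mulVec, sub_self]
  have hmem : ∀ u, A.mulVec u = μ • u →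
      u ∈ Module.End.maxGenEigenspace (Matrix.toLin' B) 0 := by
    intro u hu
    rw [Module.End.mem_maxGenEigenspace]
    exact ⟨1, by simpa [Matrix.toLin'_apply] using hBu u hu⟩
  have hspan : Submodule.span ℂ (Set.range ![u₁, u₂]) ≤
      Module.End.maxGenEigenspace (Matrix.toLin' B) 0 := by
    rw [Submodule.span_le]
    rintro x ⟨i, rfl⟩
    fin_cases i
    · exact hmem u₁ h1
    · exact hmem u₂ h2
  have hfr : 2 ≤ Module.finrank ℂ (Module.End.maxGenEigenspace (Matrix.toLin' B) 0) := by
    have := Submodule.finrank_mono hspan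
    rwa [finrank_span_eq_card hind, Fintype.card_fin] at this
  have htd : 2 ≤ (B.charpoly).natTrailingDegree := by
    have h := LinearMap.finrank_maxGenEigenspace_zero_eq (Matrix.toLin' B)
    rw [charpoly_toLin'] at h
    omega
  have hX2 : X ^ 2 ∣ B.charpoly := by
    rw [X_pow_dvd_iff]
    intro d hd
    exact coeff_eq_zero_of_lt_natTrailingDegree (lt_of_lt_of_le hd htd)
  have hA : A.charpoly = B.charpoly.comp (X - C μ) := by
    rw [hB, charpoly_sub_smul_one, comp_assoc]
    simp [add_comp]
  obtain ⟨r, hr⟩ := hX2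
  refine ⟨r.comp (X - C μ), ?_⟩
  rw [hA, hr, mul_comp, pow_comp, X_comp]

end KreinAux

/-- Let `M` be a real symplectic `2n × 2n` matrix and `λ` a simple, nonreal eigenvalue of
modulus one, with eigenvector `v ≠ 0`. Then `vᵀ·G·v̄`, with `G = -i·J`, is a nonzero real
number; in particular the Krein sign `κ(λ) = sign(vᵀ·G·v̄)` is well defined. -/
theorem krein_quantity_real_nonzero {n : ℕ} (M : Matrix (Fin n ⊕ Fin n) (Fin n ⊕ Fin n) ℝ)
    (hM : Mᵀ * fromBlocks (0 : Matrix (Fin n) (Fin n) ℝ) 1 (-1) 0 * M =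
      fromBlocks (0 : Matrix (Fin n) (Fin n) ℝ) 1 (-1) 0)
    (l : ℂ) (habs : ‖l‖ = 1) (hnotreal : l.im ≠ 0)
    (hdiv : (X - Polynomial.C l) ∣ (M.map (Complex.ofReal ·)).charpoly)
    (hsimple : ¬ (X - Polynomial.C l) ^ 2 ∣ (M.map (Complex.ofReal ·)).charpoly)
    (v : Fin n ⊕ Fin n → ℂ) (hv : v ≠ 0)
    (hev : (M.map (Complex.ofReal ·)).mulVec v = l • v) :
    (v ⬝ᵥ ((-Complex.I) • fromBlocks (0 : Matrix (Fin n) (Fin n) ℂ) 1 (-1) 0).mulVec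
        (star v)).im = 0 ∧
    v ⬝ᵥ ((-Complex.I) • fromBlocks (0 : Matrix (Fin n) (Fin n) ℂ) 1 (-1) 0).mulVec
        (star v) ≠ 0 := by
  classical
  set Jc : Matrix (Fin n ⊕ Fin n) (Fin n ⊕ Fin n) ℂ := fromBlocks 0 1 (-1) 0 with hJcdef
  set Ac : Matrix (Fin n ⊕ Fin n) (Fin n ⊕ Fin n) ℂ := M.map (Complex.ofReal ·) with hAcdef
  set c : ℂ := v ⬝ᵥ Jc.mulVec (star v) with hcdef
  have hquant : v ⬝ᵥ ((-Complex.I) • Jc).mulVec (star v) = -Complex.I * c := by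
    rw [Matrix.smul_mulVec, dotProduct_smul, smul_eq_mul]
  -- basic facts about Jc
  have hJH : Jcᴴ = -Jc := by
    rw [hJcdef, Matrix.fromBlocks_conjTranspose, Matrix.fromBlocks_neg]
    norm_num
  have hJJ : Jc * Jc = -1 := by
    rw [hJcdef, Matrix.fromBlocks_multiply, ← Matrix.fromBlocks_one, Matrix.fromBlocks_neg]
    norm_num
  -- symplectic relation over ℂ
  have hofReal : (M.map (Complex.ofReal ·)) = M.map (Complex.ofRealHom : ℝ →+* ℂ) := rfl
  have hJA : Acᵀ * Jc * Ac = Jc := by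
    have := congrArg (fun P : Matrix (Fin n ⊕ Fin n) (Fin n ⊕ Fin n) ℝ =>
      P.map (Complex.ofRealHom : ℝ →+* ℂ)) hM
    simp only [Matrix.map_mul] at this
    have htr : (Mᵀ).map (Complex.ofRealHom : ℝ →+* ℂ) = Acᵀ := by
      rw [hAcdef, hofReal, Matrix.transpose_map]
    have hfb : ((fromBlocks (0 : Matrix (Fin n) (Fin n) ℝ) 1 (-1) 0).map
        (Complex.ofRealHom : ℝ →+* ℂ)) = Jc := by
      rw [hJcdef]
      ext i j
      rcases i with i | i <;> rcases j with j | j <;>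
        simp only [Matrix.map_apply, Matrix.fromBlocks_apply₁₁, Matrix.fromBlocks_apply₁₂,
          Matrix.fromBlocks_apply₂₁, Matrix.fromBlocks_apply₂₂, Matrix.one_apply,
          Matrix.neg_apply, Matrix.zero_apply] <;>
        first
          | (split_ifs <;> simp)
          | simp
    rw [htr, hfb, ← hofReal, ← hAcdef] at this
    exact this
  -- the eigenvalue relation for star v
  have hAcstar : ∀ w, Ac *ᵥ (star w) = star (Ac *ᵥ w) := by
    intro w
    rw [Matrix.star_mulVec]
    have : Acᴴ = Acᵀ := by
      rw [Matrix.conjTranspose, hAcdef]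
      congr 1
      ext i j
      simp [Matrix.map_apply, Complex.conj_ofReal]
    rw [this, Matrix.vecMul_transpose]
  have hstarv : Ac *ᵥ (star v) = (starRingEnd ℂ) l • star v := by
    rw [hAcstar, hev, star_smul]
    rfl
  have hll : (starRingEnd ℂ) l * l = 1 := by
    rw [mul_comm, Complex.mul_conj]
    norm_cast
    rw [Complex.normSq_eq_norm_sq, habs]
    norm_num
  -- realness
  have hstarc : (starRingEnd ℂ) c = -c := by
    show star c = -c
    have h1 : star (v ⬝ᵥ (Jc *ᵥ star v)) = star (Jc *ᵥ star v) ⬝ᵥ star v :=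
      (Matrix.star_dotProduct_star _ _).symm
    rw [hcdef, h1, Matrix.star_mulVec, star_star, hJH, Matrix.vecMul_neg,
      neg_dotProduct, ← Matrix.dotProduct_mulVec]
  have hre : c.re = 0 := by
    have := congrArg Complex.re hstarc
    simp only [Complex.conj_re, Complex.neg_re] at this
    linarith
  constructor
  · rw [hquant]
    simp [Complex.mul_im, hre]
  -- nonzeroness
  rw [hquant]
  intro hq0
  have hc0 : c = 0 := by
    rcases mul_eq_zero.mp hq0 with h | h
    · exact absurd (neg_eq_zero.mp h) Complex.I_ne_zero
    · exact h
  -- ψ machinery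
  have hψA : ∀ w, v ⬝ᵥ Jc *ᵥ (Ac *ᵥ w) = (starRingEnd ℂ) l * (v ⬝ᵥ Jc *ᵥ w) := by
    intro w
    have h0 : v ⬝ᵥ ((Acᵀ * Jc * Ac) *ᵥ w) = v ⬝ᵥ Jc *ᵥ w := by rw [hJA]
    have h1 : v ⬝ᵥ ((Acᵀ * Jc * Ac) *ᵥ w) = l * (v ⬝ᵥ Jc *ᵥ (Ac *ᵥ w)) := by
      rw [mul_assoc, ← Matrix.mulVec_mulVec, Matrix.dotProduct_mulVec,
        Matrix.vecMul_transpose, hev, smul_dotProduct, smul_eq_mul,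
        ← Matrix.mulVec_mulVec]
    calc v ⬝ᵥ Jc *ᵥ (Ac *ᵥ w)
        = ((starRingEnd ℂ) l * l) * (v ⬝ᵥ Jc *ᵥ (Ac *ᵥ w)) := by rw [hll, one_mul]
      _ = (starRingEnd ℂ) l * (v ⬝ᵥ ((Acᵀ * Jc * Ac) *ᵥ w)) := by rw [h1]; ring
      _ = (starRingEnd ℂ) l * (v ⬝ᵥ Jc *ᵥ w) := by rw [h0]
  have hψpoly : ∀ (p : ℂ[X]) (w : Fin n ⊕ Fin n → ℂ),
      v ⬝ᵥ Jc *ᵥ ((aeval Ac p) *ᵥ w) = p.eval ((starRingEnd ℂ) l) * (v ⬝ᵥ Jc *ᵥ w) := by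
    intro p
    induction p using Polynomial.induction_on with
    | C a =>
      intro w
      rw [aeval_C, Algebra.algebraMap_eq_smul_one, Matrix.smul_mulVec,
        Matrix.one_mulVec, Matrix.mulVec_smul, dotProduct_smul, eval_C, smul_eq_mul]
    | add p q hp hq =>
      intro w
      rw [_root_.map_add, Matrix.add_mulVec, Matrix.mulVec_add, dotProduct_add, hp, hq,
        eval_add, add_mul]
    | monomial k a hk =>
      intro w
      have e1 : (aeval Ac (C a * X ^ (k + 1))) = (aeval Ac (C a * X ^ k)) * Ac := by
        rw [_root_.map_mul, _root_.map_mul, _root_.map_pow, _root_.map_pow, aeval_X, pow_succ, mul_assoc]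
      rw [e1, ← Matrix.mulVec_mulVec, hk, hψA]
      rw [eval_mul, eval_mul, eval_C, eval_pow, eval_pow, eval_X]
      ring
  -- charpoly conjugation symmetry
  have hcp_real : (Ac.charpoly).map (starRingEnd ℂ) = Ac.charpoly := by
    rw [hAcdef, hofReal, Matrix.charpoly_map, Polynomial.map_map]
    congr 1
    ext x
    simp [Complex.conj_ofReal]
  have hmapconj : ∀ (μ : ℂ) (k : ℕ), ((X - C μ) ^ k).map (starRingEnd ℂ)
      = (X - C ((starRingEnd ℂ) μ)) ^ k := by
    intro μ k
    rw [Polynomial.map_pow, Polynomial.map_sub, Polynomial.map_X, Polynomial.map_C]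
  set μ : ℂ := (starRingEnd ℂ) l with hμdef
  have hdivμ : (X - C μ) ∣ Ac.charpoly := by
    have := _root_.map_dvd (Polynomial.mapRingHom (starRingEnd ℂ)) hdiv
    simp only [Polynomial.coe_mapRingHom] at this
    rw [hcp_real] at this
    have h1 : (X - C l).map (starRingEnd ℂ) = X - C μ := by
      rw [Polynomial.map_sub, Polynomial.map_X, Polynomial.map_C]
    rwa [h1] at this
  have hsimpleμ : ¬ (X - C μ) ^ 2 ∣ Ac.charpoly := by
    intro hcon
    apply hsimple
    have := _root_.map_dvd (Polynomial.mapRingHom (starRingEnd ℂ)) hcon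
    simp only [Polynomial.coe_mapRingHom] at this
    rw [hcp_real, hmapconj] at this
    simpa [hμdef, Complex.conj_conj] using this
  obtain ⟨q, hq⟩ := hdivμ
  have hqnd : ¬ (X - C μ) ∣ q := by
    intro hcon
    apply hsimpleμ
    obtain ⟨r, hr⟩ := hcon
    exact ⟨r, by rw [hq, hr]; ring⟩
  have hqev : q.eval μ ≠ 0 := fun h => hqnd (Polynomial.dvd_iff_isRoot.mpr h)
  obtain ⟨a, b, hab⟩ := (Polynomial.irreducible_X_sub_C μ).coprime_iff_not_dvd.mpr hqnd
  -- Cayley-Hamilton decomposition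
  have hCH : aeval Ac Ac.charpoly = 0 := Matrix.aeval_self_charpoly Ac
  have hψzero : ∀ w, v ⬝ᵥ Jc *ᵥ w = 0 := by
    intro w
    set w₁ : Fin n ⊕ Fin n → ℂ := (aeval Ac (b * q)) *ᵥ w with hw₁
    set w₂ : Fin n ⊕ Fin n → ℂ := (aeval Ac (a * (X - C μ))) *ᵥ w with hw₂
    have hsum : w = w₁ + w₂ := by
      rw [hw₁, hw₂, ← Matrix.add_mulVec, ← map_add]
      have : b * q + a * (X - C μ) = 1 := by rw [← hab]; ring
      rw [this, _root_.map_one, Matrix.one_mulVec]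
    have hw₁eig : Ac *ᵥ w₁ = μ • w₁ := by
      have h0 : (aeval Ac (X - C μ)) *ᵥ w₁ = 0 := by
        rw [hw₁, Matrix.mulVec_mulVec, ← _root_.map_mul]
        have : (X - C μ) * (b * q) = b * Ac.charpoly := by rw [hq]; ring
        rw [this, _root_.map_mul, hCH, mul_zero, Matrix.zero_mulVec]
      have h1 : (aeval Ac (X - C μ)) = Ac - μ • 1 := by
        rw [_root_.map_sub, aeval_X, aeval_C, Algebra.algebraMap_eq_smul_one]
      rw [h1, Matrix.sub_mulVec, Matrix.smul_mulVec, Matrix.one_mulVec,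
        sub_eq_zero] at h0
      exact h0
    have hw₂ker : (aeval Ac q) *ᵥ w₂ = 0 := by
      rw [hw₂, Matrix.mulVec_mulVec, ← _root_.map_mul]
      have : q * (a * (X - C μ)) = a * Ac.charpoly := by rw [hq]; ring
      rw [this, _root_.map_mul, hCH, mul_zero, Matrix.zero_mulVec]
    have hψw₂ : v ⬝ᵥ Jc *ᵥ w₂ = 0 := by
      have := hψpoly q w₂
      rw [hw₂ker] at this
      simp only [Matrix.mulVec_zero, dotProduct_zero] at this
      rcases mul_eq_zero.mp this.symm with h | h
      · exact absurd h hqev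
      · exact h
    have hψw₁ : v ⬝ᵥ Jc *ᵥ w₁ = 0 := by
      by_contra hne
      have hind : LinearIndependent ℂ ![star v, w₁] := by
        rw [LinearIndependent.pair_iff]
        intro s t hst
        have happ : s * (v ⬝ᵥ Jc *ᵥ star v) + t * (v ⬝ᵥ Jc *ᵥ w₁) = 0 := by
          have := congrArg (fun u => v ⬝ᵥ Jc *ᵥ u) hst
          simpa [Matrix.mulVec_add, dotProduct_add, Matrix.mulVec_smul,
            dotProduct_smul, smul_eq_mul] using this
        rw [← hcdef, hc0, mul_zero, zero_add] at happ
        have ht : t = 0 := by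
          rcases mul_eq_zero.mp happ with h | h
          · exact h
          · exact absurd h hne
        refine ⟨?_, ht⟩
        rw [ht, zero_smul, add_zero] at hst
        rcases smul_eq_zero.mp hst with h | h
        · exact h
        · exact absurd h (by simpa [star_eq_zero] using hv)
      exact hsimpleμ (KreinAux.pow_two_dvd_charpoly Ac μ (star v) w₁ hstarv hw₁eig hind)
    rw [hsum, Matrix.mulVec_add, dotProduct_add, hψw₁, hψw₂, add_zero]
  -- nondegeneracy: conclude v = 0
  apply hv
  funext i
  have := hψzero (Jc *ᵥ Pi.single i 1)
  rw [Matrix.mulVec_mulVec, hJJ, Matrix.neg_mulVec, Matrix.one_mulVec,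
    dotProduct_neg, neg_eq_zero, dotProduct_single_one] at this
  simpa using this
end
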